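/- Let P₁, P₂ ⊂ A* be prefix codes. Then P₁ ≡_bd P₂ if and only if ends(P₁) = ends(P₂), i.e., P₁·A^ω = P₂·A^ω. -/

import Mathlib

open List

/-- Finite words over the alphabet A = {0,1}. -/
abbrev W := List Bool

/-- Prefix-comparability of words. -/
def pc (x y : W) : Prop := x <+: y ∨ y <+: x

/-- `RI L` is the right ideal `L·A*` generated by `L`. -/
def RI (L : Set W) : Set W := {y | ∃ x ∈ L, ∃ w : W, y = x ++ w}

/-- `R` is a right ideal of `A*`. -/
def isRightIdeal (R : Set W) : Prop := ∀ x ∈ R, ∀ w : W, x ++ w ∈ R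

/-- End-equivalence of sets: `L₁A*` and `L₂A*` intersect the same right ideals. -/
def endEquiv (L₁ L₂ : Set W) : Prop :=
  ∀ R : Set W, isRightIdeal R → ((R ∩ RI L₁).Nonempty ↔ (R ∩ RI L₂).Nonempty)

/-- A prefix code: no two distinct elements are prefix-comparable. -/
def isPrefixCode (P : Set W) : Prop := ∀ x ∈ P, ∀ y ∈ P, x <+: y → x = y

/-- Right-ideal morphism, as a partial function `A* → A*` (using `Option`):
    whenever `f x = some y`, also `f (x++w) = some (y++w)`.
    (This forces the domain to be a right ideal.) -/
def isRIM (f : W → Option W) : Prop :=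
  ∀ x y : W, f x = some y → ∀ w : W, f (x ++ w) = some (y ++ w)

/-- Domain of a partial function. -/
def Dom (f : W → Option W) : Set W := {x | f x ≠ none}

/-- Image of a partial function. -/
def Im (f : W → Option W) : Set W := {y | ∃ x, f x = some y}

/-- The prefix code of minimal elements generating a right ideal `S`. -/
def prefC (S : Set W) : Set W := {x | x ∈ S ∧ ∀ p : W, p <+: x → p ≠ x → p ∉ S}

/-- Domain code of a right-ideal morphism. -/
def domC (f : W → Option W) : Set W := prefC (Dom f)

/-- Image code of a right-ideal morphism. -/
def imC (f : W → Option W) : Set W := prefC (Im f)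

/-- Image of a set under a partial function. -/
def fImage (f : W → Option W) (L : Set W) : Set W := {y | ∃ x ∈ L, f x = some y}

/-- Preimage of a set under a partial function. -/
def fPreim (f : W → Option W) (S : Set W) : Set W := {x | ∃ y ∈ S, f x = some y}

/-- End-equivalence of right-ideal morphisms: the domains are end-equivalent,
    and the functions agree on the common domain. -/
def endEquivF (f g : W → Option W) : Prop :=
  endEquiv (Dom f) (Dom g) ∧ ∀ x, x ∈ Dom f → x ∈ Dom g → f x = g x

/-- Bounded end-equivalence of sets. -/
def bdSets (P Q : Set W) : Prop :=
  endEquiv P Q ∧ ∃ β : ℕ → ℕ, ∀ x₁ ∈ P, ∀ x₂ ∈ Q, pc x₁ x₂ →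
    x₁.length ≤ β x₂.length ∧ x₂.length ≤ β x₁.length

/-- Bounded end-equivalence of right-ideal morphisms. -/
def bdEquivF (f g : W → Option W) : Prop :=
  bdSets (domC f) (domC g) ∧ endEquivF f g

/-- Concatenation of a finite word with an infinite word. -/
def wcat (x : W) (w : ℕ → Bool) : ℕ → Bool :=
  fun i => if h : i < x.length then x.get ⟨i, h⟩ else w (i - x.length)

/-- `ends L = L·A^ω`: the infinite words having a prefix in `L`. -/
def ends (L : Set W) : Set (ℕ → Bool) := {u | ∃ x ∈ L, ∃ w : ℕ → Bool, u = wcat x w}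

/-- Composition of partial functions: `pcomp f g = f ∘ g` (apply `g` first). -/
def pcomp (f g : W → Option W) : W → Option W := fun x => (g x).bind f

/-- `sub f g`: the partial function `g` extends the partial function `f`. -/
def sub (f g : W → Option W) : Prop := ∀ x y : W, f x = some y → g x = some y


/-! The cylinder `x·A^ω` of a word is clopen, hence compact, in Cantor space. If
`ends P₁ = ends P₂`, the cylinder of `x ∈ P₁` is covered by the cylinders of finitely many words
of `P₂`, and as `P₂` is a prefix code these are all the words of `P₂` comparable with `x`; since
there are finitely many words of each length, this yields `β`. Conversely, if `u ∈ ends P₁` has the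
prefix `x ∈ P₁`, take a prefix `v` of `u` longer than `β |x|`: the right ideal `v·A*` meets
`P₁A*`, hence `P₂A*`, above some `q ∈ P₂`, and `q` cannot extend `v`, so it is a prefix of `u`. -/

lemma pc.symm {x y : W} (h : pc x y) : pc y x := Or.symm h

lemma isPrefixCode.eq_of_pc {P : Set W} (hP : isPrefixCode P) {x y : W} (hx : x ∈ P)
    (hy : y ∈ P) (h : pc x y) : x = y :=
  h.elim (hP x hx y hy) fun h => (hP y hy x hx h).symm

lemma mem_RI_iff {L : Set W} {t : W} : t ∈ RI L ↔ ∃ x ∈ L, x <+: t := by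
  simp only [RI, Set.mem_ofPred_eq, IsPrefix, eq_comm]

lemma isRightIdeal_RI (L : Set W) : isRightIdeal (RI L) := by
  rintro _ ⟨x, hx, w, rfl⟩ w'
  exact ⟨x, hx, w ++ w', by simp⟩

lemma endEquiv.symm {P Q : Set W} (h : endEquiv P Q) : endEquiv Q P :=
  fun R hR => (h R hR).symm

/-- The cylinder `x·A^ω`. -/
def cylinder (x : W) : Set (ℕ → Bool) := {u | ∀ i : Fin x.length, u i = x[i]}

lemma wcat_mem_cylinder (x : W) (w : ℕ → Bool) : wcat x w ∈ cylinder x := fun i => by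
  simp [wcat]

lemma ends_eq_biUnion_cylinder (L : Set W) : ends L = ⋃ x ∈ L, cylinder x := by
  ext u
  simp only [ends, Set.mem_ofPred_eq, Set.mem_iUnion, exists_prop]
  refine exists_congr fun x => and_congr_right fun _ => ⟨?_, fun hu => ?_⟩
  · rintro ⟨w, rfl⟩
    exact wcat_mem_cylinder x w
  · refine ⟨fun i => u (i + x.length), funext fun i => ?_⟩
    by_cases hi : i < x.length
    · simpa [wcat, hi] using hu ⟨i, hi⟩
    · simp [wcat, hi, Nat.sub_add_cancel (not_lt.mp hi)]

lemma cylinder_subset_ends {L : Set W} {x : W} (hx : x ∈ L) : cylinder x ⊆ ends L :=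
  ends_eq_biUnion_cylinder L ▸ Set.subset_biUnion_of_mem hx

lemma exists_mem_cylinder_length_eq (u : ℕ → Bool) (n : ℕ) :
    ∃ v, u ∈ cylinder v ∧ v.length = n :=
  ⟨List.ofFn fun i : Fin n => u i, fun i => by simp, List.length_ofFn⟩

lemma prefix_of_mem_cylinder {x y : W} {u : ℕ → Bool} (hx : u ∈ cylinder x) (hy : u ∈ cylinder y)
    (hxy : x.length ≤ y.length) : x <+: y := by
  rw [prefix_iff_eq_take]
  refine ext_getElem (by simp [hxy]) fun i hi _ => ?_
  rw [getElem_take]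
  simpa using (hx ⟨i, hi⟩).symm.trans (hy ⟨i, by omega⟩)

lemma pc_of_mem_cylinder {x y : W} {u : ℕ → Bool} (hx : u ∈ cylinder x) (hy : u ∈ cylinder y) :
    pc x y :=
  (le_total x.length y.length).imp (prefix_of_mem_cylinder hx hy) (prefix_of_mem_cylinder hy hx)

lemma cylinder_subset_of_prefix {x y : W} (h : x <+: y) : cylinder y ⊆ cylinder x :=
  fun u hu i => (hu ⟨i, by have := h.length_le; omega⟩).trans (h.getElem i.2).symm

lemma cylinder_inter_nonempty {x y : W} (h : pc x y) : (cylinder x ∩ cylinder y).Nonempty := by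
  rcases h with h | h
  · exact ⟨_, cylinder_subset_of_prefix h (wcat_mem_cylinder y 0), wcat_mem_cylinder y 0⟩
  · exact ⟨_, wcat_mem_cylinder x 0, cylinder_subset_of_prefix h (wcat_mem_cylinder x 0)⟩

lemma isClopen_cylinder (x : W) : IsClopen (cylinder x) := by
  rw [cylinder, Set.ofPred_forall]
  exact isClopen_iInter_of_finite fun i =>
    (isClopen_discrete {x[i]}).preimage (continuous_apply (i : ℕ))

lemma finite_pc_of_cylinder_subset_ends {Q : Set W} (hQ : isPrefixCode Q) {x : W}
    (hx : cylinder x ⊆ ends Q) : {y ∈ Q | pc x y}.Finite := by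
  rw [ends_eq_biUnion_cylinder] at hx
  obtain ⟨t, htQ, ht, hcover⟩ :=
    (isClopen_cylinder x).isClosed.isCompact.elim_finite_subcover_image
      (fun y _ => (isClopen_cylinder y).isOpen) hx
  refine ht.subset fun y ⟨hyQ, hxy⟩ => ?_
  obtain ⟨u, hux, huy⟩ := cylinder_inter_nonempty hxy
  obtain ⟨z, hzt, huz⟩ := Set.mem_iUnion₂.mp (hcover hux)
  rwa [← hQ.eq_of_pc (htQ hzt) hyQ (pc_of_mem_cylinder huz huy)]

lemma exists_length_bound {P : Set W} {S : W → Set W} (hS : ∀ x ∈ P, (S x).Finite) :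
    ∃ β : ℕ → ℕ, ∀ x ∈ P, ∀ y ∈ S x, y.length ≤ β x.length := by
  have hbdd (n : ℕ) : BddAbove (length '' ⋃ x ∈ {x ∈ P | x.length = n}, S x) :=
    (((List.finite_length_eq Bool n).subset fun _ hx => hx.2).biUnion
      fun x hx => hS x hx.1).image _ |>.bddAbove
  choose β hβ using hbdd
  exact ⟨β, fun x hx y hy => hβ x.length ⟨y, Set.mem_biUnion ⟨hx, rfl⟩ hy, rfl⟩⟩

lemma nonempty_inter_RI_of_ends_subset {P Q : Set W} (h : ends P ⊆ ends Q) {R : Set W}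
    (hR : isRightIdeal R) (hP : (R ∩ RI P).Nonempty) : (R ∩ RI Q).Nonempty := by
  obtain ⟨z, hzR, hzP⟩ := hP
  obtain ⟨p, hp, hpz⟩ := mem_RI_iff.mp hzP
  have hu := wcat_mem_cylinder z 0
  obtain ⟨q, hq, huq⟩ := Set.mem_iUnion₂.mp <| ends_eq_biUnion_cylinder Q ▸
    h (cylinder_subset_ends hp (cylinder_subset_of_prefix hpz hu))
  obtain ⟨v, hv, hvlen⟩ := exists_mem_cylinder_length_eq (wcat z 0) (max z.length q.length)
  obtain ⟨w, rfl⟩ := prefix_of_mem_cylinder hu hv (by omega)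
  exact ⟨_, hR z hzR w, mem_RI_iff.mpr ⟨q, hq, prefix_of_mem_cylinder huq hv (by omega)⟩⟩

lemma endEquiv_of_ends_eq {P Q : Set W} (h : ends P = ends Q) : endEquiv P Q := fun _ hR =>
  ⟨nonempty_inter_RI_of_ends_subset h.le hR, nonempty_inter_RI_of_ends_subset h.ge hR⟩

lemma ends_subset_of_endEquiv {P Q : Set W} (hPQ : endEquiv P Q) {β : ℕ → ℕ}
    (hβ : ∀ x ∈ P, ∀ y ∈ Q, x <+: y → y.length ≤ β x.length) : ends P ⊆ ends Q := by
  intro u hu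
  obtain ⟨x, hx, hux⟩ := Set.mem_iUnion₂.mp (ends_eq_biUnion_cylinder P ▸ hu)
  obtain ⟨v, huv, hvlen⟩ := exists_mem_cylinder_length_eq u (x.length + β x.length + 1)
  have hxv : x <+: v := prefix_of_mem_cylinder hux huv (by omega)
  obtain ⟨z, hzv, hzQ⟩ := (hPQ _ (isRightIdeal_RI {v})).mp
    ⟨v, mem_RI_iff.mpr ⟨v, rfl, List.prefix_refl v⟩, mem_RI_iff.mpr ⟨x, hx, hxv⟩⟩
  obtain ⟨_, rfl, hvz⟩ := mem_RI_iff.mp hzv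
  obtain ⟨q, hq, hqz⟩ := mem_RI_iff.mp hzQ
  rcases prefix_or_prefix_of_prefix hqz hvz with hqv | hvq
  · exact cylinder_subset_ends hq (cylinder_subset_of_prefix hqv huv)
  · have hq_short := hβ x hx q hq (hxv.trans hvq)
    have hq_long := hvq.length_le
    omega

/-- for prefix codes, bounded end-equivalence coincides with having the
    same ends in Cantor space. -/
theorem bdEquiv_iff_ends_eq (P₁ P₂ : Set W)
    (h₁ : isPrefixCode P₁) (h₂ : isPrefixCode P₂) :
    bdSets P₁ P₂ ↔ ends P₁ = ends P₂ := by
  constructor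
  · rintro ⟨hPQ, β, hβ⟩
    exact (ends_subset_of_endEquiv hPQ fun x hx y hy hxy => (hβ x hx y hy (.inl hxy)).2).antisymm
      (ends_subset_of_endEquiv hPQ.symm fun y hy x hx hyx => (hβ x hx y hy (.inr hyx)).1)
  · intro h
    have hfin : ∀ x ∈ P₁ ∪ P₂, {y ∈ P₁ ∪ P₂ | pc x y}.Finite := by
      intro x hx
      have hcyl : cylinder x ⊆ ends P₁ := hx.elim cylinder_subset_ends (h ▸ cylinder_subset_ends ·)
      exact ((finite_pc_of_cylinder_subset_ends h₁ hcyl).union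
        (finite_pc_of_cylinder_subset_ends h₂ (h ▸ hcyl))).subset
          fun y ⟨hy, hxy⟩ => hy.imp (⟨·, hxy⟩) (⟨·, hxy⟩)
    obtain ⟨β, hβ⟩ := exists_length_bound hfin
    exact ⟨endEquiv_of_ends_eq h, β, fun x₁ hx₁ x₂ hx₂ hpc =>
      ⟨hβ x₂ (.inr hx₂) x₁ ⟨.inl hx₁, hpc.symm⟩, hβ x₁ (.inl hx₁) x₂ ⟨.inr hx₂, hpc⟩⟩⟩
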